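/- With (S, I) as above, the exchange axiom holds: if A, B ∈ I with |A| > |B|, then there exists s ∈ A such that B ∪ {s} ∈ I. -/

import Mathlib

/-! `A ∈ I` says that the defect `|A| - rk A` is at most `n - m`. Adding a vector outside the
span of `B` raises rank and cardinality together, so the defect of `B` does not grow. Otherwise
all of `A` lies in the span of `B`, so `rk A ≤ rk B`, and adding any vector of `A \ B` gives a set
of cardinality at most `|A|` and rank `rk B`, hence defect at most that of `A`. -/

open scoped Classical

/-- rank of a finite set of linear functionals: dimension of its span. -/
noncomputable def rk {n : ℕ} {V : Submodule (ZMod 2) (Fin n → ZMod 2)}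
    (A : Finset (Module.Dual (ZMod 2) V)) : ℕ :=
  Module.finrank (ZMod 2) (Submodule.span (ZMod 2) (A : Set (Module.Dual (ZMod 2) V)))

open Module Submodule

section SpanDefect

variable (K : Type*) {M : Type*} [DivisionRing K] [AddCommGroup M] [Module K M] [DecidableEq M]

noncomputable def spanDefect (X : Finset M) : ℤ :=
  X.card - finrank K (span K (X : Set M))

variable {K}

theorem spanDefect_insert_le_of_notMem_span {s : M} {X : Finset M}
    (hs : s ∉ span K (X : Set M)) : spanDefect K (insert s X) ≤ spanDefect K X := by
  have hsX : s ∉ X := fun h => hs (subset_span h)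
  have hlt : span K (X : Set M) < span K ((insert s X : Finset M) : Set M) := by
    rw [Finset.coe_insert]
    exact lt_of_le_of_ne (span_mono (Set.subset_insert _ _))
      fun heq => hs (heq ▸ subset_span (Set.mem_insert s _))
  have hrk := finrank_lt_finrank_of_lt hlt
  simp only [spanDefect, Finset.card_insert_of_notMem hsX]
  omega

theorem spanDefect_insert_le_of_subset_span {A B : Finset M} {s : M}
    (hAB : (A : Set M) ⊆ span K (B : Set M)) (hcard : B.card < A.card) (hsA : s ∈ A)
    (hsB : s ∉ B) : spanDefect K (insert s B) ≤ spanDefect K A := by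
  have hspan : span K ((insert s B : Finset M) : Set M) = span K (B : Set M) := by
    rw [Finset.coe_insert]
    exact span_insert_eq_span (hAB hsA)
  have hrk : finrank K (span K (A : Set M)) ≤ finrank K (span K (B : Set M)) :=
    finrank_mono (span_le.mpr hAB)
  rw [spanDefect, spanDefect, hspan, Finset.card_insert_of_notMem hsB]
  omega

theorem exists_mem_spanDefect_insert_le {A B : Finset M} (hcard : B.card < A.card) :
    ∃ s ∈ A, spanDefect K (insert s B) ≤ max (spanDefect K A) (spanDefect K B) := by
  by_cases hAB : (A : Set M) ⊆ span K (B : Set M)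
  · obtain ⟨s, hsA, hsB⟩ := Finset.exists_mem_notMem_of_card_lt_card hcard
    exact ⟨s, hsA, le_max_of_le_left (spanDefect_insert_le_of_subset_span hAB hcard hsA hsB)⟩
  · obtain ⟨s, hsA, hs⟩ := Set.not_subset.mp hAB
    exact ⟨s, hsA, le_max_of_le_right (spanDefect_insert_le_of_notMem_span hs)⟩

end SpanDefect

theorem matroid_exchange_general (n m : ℕ) (V : Submodule (ZMod 2) (Fin n → ZMod 2))
    (A B : Finset (Module.Dual (ZMod 2) V))
    (hA : (m : ℤ) - (rk A : ℤ) ≤ (n : ℤ) - (A.card : ℤ))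
    (hB : (m : ℤ) - (rk B : ℤ) ≤ (n : ℤ) - (B.card : ℤ))
    (hcard : B.card < A.card) :
    ∃ s ∈ A, (m : ℤ) - (rk (insert s B) : ℤ) ≤ (n : ℤ) - ((insert s B).card : ℤ) := by
  obtain ⟨s, hsA, hs⟩ := exists_mem_spanDefect_insert_le (K := ZMod 2) hcard
  refine ⟨s, hsA, ?_⟩
  simp only [spanDefect] at hs
  simp only [rk] at *
  omega

/-- the exchange axiom for `I = {A ⊆ S : m - rk A ≤ n - |A|}`:
if `A, B ∈ I` with `|A| > |B|`, there is `s ∈ A` with `B ∪ {s} ∈ I`. -/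
theorem matroid_exchange (n m : ℕ) (V : Submodule (ZMod 2) (Fin n → ZMod 2))
    (hV : Module.finrank (ZMod 2) V = m)
    (S : Finset (Module.Dual (ZMod 2) V))
    (A B : Finset (Module.Dual (ZMod 2) V)) (hAS : A ⊆ S) (hBS : B ⊆ S)
    (hA : (m : ℤ) - (rk A : ℤ) ≤ (n : ℤ) - (A.card : ℤ))
    (hB : (m : ℤ) - (rk B : ℤ) ≤ (n : ℤ) - (B.card : ℤ))
    (hcard : B.card < A.card) :
    ∃ s ∈ A, (m : ℤ) - (rk (insert s B) : ℤ) ≤ (n : ℤ) - ((insert s B).card : ℤ) :=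
  matroid_exchange_general n m V A B hA hB hcard
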